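/- Let A be a pseudo-hoop. If x₁∨y = 1 and x₂∨y = 1, then (x₁·x₂)∨y = 1. Consequently, for every subset M ⊆ A the polar M^⊥ is a filter of A. -/
import Mathlib


/-- A pseudo-hoop: an algebra `(A; ·, →, ⇝, 1)` satisfying the pseudo-hoop
axioms; the induced relation `x ≤ y ↔ x → y = 1` is a partial order. -/
class PseudoHoop (A : Type*) extends Mul A, One A, PartialOrder A where
  arr : A → A → A
  sarr : A → A → A
  mul_one' : ∀ x : A, x * 1 = x
  one_mul' : ∀ x : A, 1 * x = x
  arr_self : ∀ x : A, arr x x = 1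
  sarr_self : ∀ x : A, sarr x x = 1
  arr_mul : ∀ x y z : A, arr (x * y) z = arr x (arr y z)
  sarr_mul : ∀ x y z : A, sarr (x * y) z = sarr y (sarr x z)
  div₁ : ∀ x y : A, (arr x y) * x = (arr y x) * y
  div₂ : ∀ x y : A, (arr x y) * x = x * (sarr x y)
  div₃ : ∀ x y : A, x * (sarr x y) = y * (sarr y x)
  le_iff_arr : ∀ x y : A, x ≤ y ↔ arr x y = 1

namespace PseudoHoop

variable {A : Type*} [PseudoHoop A]

/-- The meet `x ∧ y = (x → y) · x` of a pseudo-hoop. -/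
def pinf (x y : A) : A := (arr x y) * x

/-- A filter of a pseudo-hoop: an upper set containing `1` that is closed
under multiplication. -/
def PHFilter (F : Set A) : Prop :=
  IsUpperSet F ∧ (1 : A) ∈ F ∧ ∀ x ∈ F, ∀ y ∈ F, x * y ∈ F

/-- The polar `M^⊥ = {x | x ∨ y = 1 for all y ∈ M}`, where `x ∨ y = 1` means
that `1` is the least upper bound of `{x, y}`. -/
def polar (M : Set A) : Set A := {x : A | ∀ y ∈ M, IsLUB {x, y} (1 : A)}

/-- `ν_F(X)`: the upper bounds of `X` lying in `F`. -/
def nuF (F X : Set A) : Set A := {a : A | a ∈ F ∧ ∀ x ∈ X, x ≤ a}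

/-- Elementwise implication `Y ⟶ X = {a → x | a ∈ Y, x ∈ X}`. -/
def setArr (Y X : Set A) : Set A := {c : A | ∃ a ∈ Y, ∃ x ∈ X, c = arr a x}

/-- Elementwise implication `Y ⟿ X = {a ⇝ x | a ∈ Y, x ∈ X}`. -/
def setSarr (Y X : Set A) : Set A := {c : A | ∃ a ∈ Y, ∃ x ∈ X, c = sarr a x}

end PseudoHoop

open PseudoHoop

section Aux

variable {A : Type*} [PseudoHoop A]

lemma ph_le_arr (x y z : A) : x * y ≤ z ↔ x ≤ arr y z := by
  rw [le_iff_arr, arr_mul, ← le_iff_arr]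

lemma ph_le_iff_sarr (x y : A) : x ≤ y ↔ sarr x y = 1 := by
  constructor
  · intro h
    have h1 : arr x y = 1 := (le_iff_arr x y).mp h
    have h2 : x * sarr x y = x := by rw [← div₂, h1, one_mul']
    have h3 := sarr_mul x (sarr x y) y
    rw [h2, sarr_self] at h3
    exact h3
  · intro h
    have h2 : arr x y * x = x := by rw [div₂, h, mul_one']
    have h3 := arr_mul (arr x y) x y
    rw [h2, arr_self] at h3
    exact (le_iff_arr x y).mpr h3

lemma ph_le_sarr (x y z : A) : x * y ≤ z ↔ y ≤ sarr x z := by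
  rw [ph_le_iff_sarr, sarr_mul, ← ph_le_iff_sarr]

lemma ph_mul_le_mul_left {a b : A} (c : A) (h : a ≤ b) : a * c ≤ b * c :=
  (ph_le_arr a c (b * c)).mpr (h.trans ((ph_le_arr b c (b * c)).mp le_rfl))

lemma ph_le_one (x : A) : x ≤ 1 := by
  have h1 : x ≤ arr 1 x := by
    rw [le_iff_arr, ← arr_mul, mul_one', arr_self]
  have h2 : arr x 1 * x = arr 1 x := by rw [div₁, mul_one']
  have h3 : arr x 1 * x ≤ 1 := (ph_le_arr _ _ _).mpr le_rfl
  rw [h2] at h3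
  exact h1.trans h3

lemma ph_pair_ub {a b z : A} (ha : a ≤ z) (hb : b ≤ z) :
    z ∈ upperBounds ({a, b} : Set A) := by
  intro w hw
  rcases Set.mem_insert_iff.mp hw with rfl | hw
  · exact ha
  · rw [Set.mem_singleton_iff] at hw
    subst hw
    exact hb

end Aux

/-- If `x₁ ∨ y = 1` and `x₂ ∨ y = 1` then `(x₁·x₂) ∨ y = 1`; consequently
every polar `M^⊥` is a filter. -/
theorem mul_lub_one_and_polar_filter {A : Type*} [PseudoHoop A] :
    (∀ x₁ x₂ y : A, IsLUB {x₁, y} (1 : A) → IsLUB {x₂, y} (1 : A) →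
      IsLUB {x₁ * x₂, y} (1 : A)) ∧
    (∀ M : Set A, PHFilter (polar M)) := by
  have main : ∀ x₁ x₂ y : A, IsLUB {x₁, y} (1 : A) → IsLUB {x₂, y} (1 : A) →
      IsLUB {x₁ * x₂, y} (1 : A) := by
    intro x₁ x₂ y h1 h2
    have hx₁1 : x₁ ≤ 1 := h1.1 (Set.mem_insert _ _)
    constructor
    · refine ph_pair_ub ?_ (ph_le_one y)
      exact ph_le_one _
    · intro z hz
      have hxz : x₁ * x₂ ≤ z := hz (Set.mem_insert _ _)
      have hyz : y ≤ z := hz (Set.mem_insert_of_mem _ rfl)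
      have h₂u : x₂ ≤ sarr x₁ z := (ph_le_sarr _ _ _).mp hxz
      have hzz : x₁ * z ≤ z := by
        have := ph_mul_le_mul_left z hx₁1
        rwa [one_mul'] at this
      have hzu : z ≤ sarr x₁ z := (ph_le_sarr _ _ _).mp hzz
      have hyu : y ≤ sarr x₁ z := hyz.trans hzu
      have h1u : (1 : A) ≤ sarr x₁ z := h2.2 (ph_pair_ub h₂u hyu)
      have hx₁z : x₁ ≤ z := by
        have := (ph_le_sarr x₁ 1 z).mpr h1u
        rwa [mul_one'] at this
      exact h1.2 (ph_pair_ub hx₁z hyz)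
  refine ⟨main, ?_⟩
  intro M
  refine ⟨?_, ?_, ?_⟩
  · intro a b hab ha y hy
    refine ⟨ph_pair_ub (ph_le_one b) (ph_le_one y), ?_⟩
    intro z hz
    exact (ha y hy).2
      (ph_pair_ub (hab.trans (hz (Set.mem_insert _ _)))
        (hz (Set.mem_insert_of_mem _ rfl)))
  · intro y hy
    exact ⟨ph_pair_ub le_rfl (ph_le_one y), fun z hz => hz (Set.mem_insert _ _)⟩
  · intro a ha b hb y hy
    exact main a b y (ha y hy) (hb y hy)
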